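/- arXiv:1003.6106 — 2 statements merged into one kernel-verified Lean document; each statement's English description precedes it below -/
import Mathlib

section
/- Every derivation of the matrix algebra M_n(ℂ) (n ≥ 1) is inner, i.e., for every derivation D : M_n(ℂ) → M_n(ℂ) there exists a matrix γ ∈ M_n(ℂ) with D(a) = γa − aγ for all a. -/
/-!
An element `e = ∑ xₖ ⊗ yₖ` of `A ⊗ A` with `∑ xₖ yₖ = 1` and `(a ⊗ 1) e = e (1 ⊗ a)` for all `a`
(a separability idempotent) makes every derivation `D` inner: applying `x ⊗ y ↦ D x * y` to both
sides of `(a ⊗ 1) e = e (1 ⊗ a)` and using the Leibniz rule gives `D a + a γ = γ a` with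
`γ = ∑ D xₖ * yₖ`. For matrices, `e = ∑ₖ Eₖᵢ ⊗ Eᵢₖ` is such an element for any fixed index `i`.
-/

open TensorProduct

section Derivation

variable {R A : Type*} [CommSemiring R] [Ring A] [Algebra R A]

def derivMul (D : A →ₗ[R] A) : A ⊗[R] A →ₗ[R] A :=
  lift (LinearMap.mul R A ∘ₗ D)

@[simp]
theorem derivMul_tmul (D : A →ₗ[R] A) (x y : A) : derivMul D (x ⊗ₜ y) = D x * y :=
  rfl

theorem derivMul_tmul_one_mul (D : A →ₗ[R] A) (hD : ∀ a b, D (a * b) = D a * b + a * D b)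
    (a : A) (t : A ⊗[R] A) :
    derivMul D ((a ⊗ₜ 1) * t) = D a * LinearMap.mul' R A t + a * derivMul D t := by
  induction t using TensorProduct.induction_on with
  | zero => simp
  | tmul x y => simp [hD, add_mul, mul_assoc]
  | add s t hs ht => simp only [mul_add, map_add, hs, ht]; abel

theorem derivMul_mul_one_tmul (D : A →ₗ[R] A) (a : A) (t : A ⊗[R] A) :
    derivMul D (t * (1 ⊗ₜ a)) = derivMul D t * a := by
  induction t using TensorProduct.induction_on with
  | zero => simp
  | tmul x y => simp [mul_assoc]
  | add s t hs ht => simp only [add_mul, map_add, hs, ht]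

theorem eq_derivMul_mul_sub_mul (D : A →ₗ[R] A) (hD : ∀ a b, D (a * b) = D a * b + a * D b)
    {e : A ⊗[R] A} (he : LinearMap.mul' R A e = 1) (hcomm : ∀ a, (a ⊗ₜ 1) * e = e * (1 ⊗ₜ a))
    (a : A) : D a = derivMul D e * a - a * derivMul D e := by
  have h := derivMul_tmul_one_mul D hD a e
  rw [hcomm, derivMul_mul_one_tmul, he, mul_one] at h
  rw [h, add_sub_cancel_right]

end Derivation

namespace Matrix

variable {R m : Type*} [CommSemiring R] [Fintype m] [DecidableEq m]

theorem mul_single_one_eq_sum (a : Matrix m m R) (k i : m) :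
    a * single k i 1 = ∑ j, a j k • single j i 1 := by
  ext p q
  by_cases h : i = q <;> simp [mul_apply, single_apply, sum_apply, h]

theorem single_one_mul_eq_sum (a : Matrix m m R) (i k : m) :
    single i k 1 * a = ∑ l, a k l • single i l 1 := by
  ext p q
  by_cases h : i = p <;> simp [mul_apply, single_apply, sum_apply, h]

variable (R) in
def separabilityIdempotent (i : m) : Matrix m m R ⊗[R] Matrix m m R :=
  ∑ k, single k i 1 ⊗ₜ single i k 1

theorem mul'_separabilityIdempotent (i : m) :
    LinearMap.mul' R (Matrix m m R) (separabilityIdempotent R i) = 1 := by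
  simp only [separabilityIdempotent, map_sum, LinearMap.mul'_apply, single_mul_single_same,
    one_mul, sum_single_one]

theorem tmul_one_mul_separabilityIdempotent (i : m) (a : Matrix m m R) :
    (a ⊗ₜ 1) * separabilityIdempotent R i = separabilityIdempotent R i * (1 ⊗ₜ a) := by
  simp only [separabilityIdempotent, Finset.mul_sum, Finset.sum_mul,
    Algebra.TensorProduct.tmul_mul_tmul, one_mul, mul_one, mul_single_one_eq_sum,
    single_one_mul_eq_sum, sum_tmul, tmul_sum, ← smul_tmul', tmul_smul]
  exact Finset.sum_comm

end Matrix

theorem derivation_matrix_inner (n : ℕ) (hn : 1 ≤ n)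
    (D : Matrix (Fin n) (Fin n) ℂ →ₗ[ℂ] Matrix (Fin n) (Fin n) ℂ)
    (hD : ∀ a b, D (a * b) = D a * b + a * D b) :
    ∃ γ : Matrix (Fin n) (Fin n) ℂ, ∀ a, D a = γ * a - a * γ := by
  let e := Matrix.separabilityIdempotent ℂ (⟨0, hn⟩ : Fin n)
  exact ⟨derivMul D e, eq_derivMul_mul_sub_mul D hD (Matrix.mul'_separabilityIdempotent _)
    (Matrix.tmul_one_mul_separabilityIdempotent _)⟩
end

section
/- Let A be a Lie algebra over a commutative ring, L ⊆ A an ideal, and let ω be an L-valued alternating 1-form on A with ω(ℓ) = −ℓ for all ℓ ∈ L (a connection 1-form). Define R(X,Y) = (dω)(X,Y) + [ω(X), ω(Y)], where d is the Chevalley–Eilenberg differential for the adjoint action of A on L. Then R is horizontal: R(ℓ, Y) = 0 for all ℓ ∈ L and Y ∈ A. -/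
theorem curvature_horizontal_general {R A : Type*} [CommRing R] [LieRing A] [LieAlgebra R A]
    (I : LieIdeal R A) (ω : A →ₗ[R] A)
    (hnorm : ∀ ℓ ∈ I, ω ℓ = -ℓ) :
    ∀ ℓ ∈ I, ∀ Y : A,
      ⁅ℓ, ω Y⁆ - ⁅Y, ω ℓ⁆ - ω ⁅ℓ, Y⁆ + ⁅ω ℓ, ω Y⁆ = 0 := by
  intro ℓ hℓ Y
  rw [hnorm ℓ hℓ, hnorm ⁅ℓ, Y⁆ (lie_mem_left R A I ℓ Y hℓ), lie_neg, neg_lie, ← lie_skew ℓ Y]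
  abel

/-- The curvature of a connection 1-form on a Lie algebra with ideal `I` is horizontal. -/
theorem curvature_horizontal {R A : Type*} [CommRing R] [LieRing A] [LieAlgebra R A]
    (I : LieIdeal R A) (ω : A →ₗ[R] A)
    (hmem : ∀ x, ω x ∈ I) (hnorm : ∀ ℓ ∈ I, ω ℓ = -ℓ) :
    ∀ ℓ ∈ I, ∀ Y : A,
      ⁅ℓ, ω Y⁆ - ⁅Y, ω ℓ⁆ - ω ⁅ℓ, Y⁆ + ⁅ω ℓ, ω Y⁆ = 0 :=
  curvature_horizontal_general I ω hnorm
end
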